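/- arXiv:1903.02432 — 4 statements merged into one kernel-verified Lean document; each statement's English description precedes it below -/
import Mathlib

section
/- Let ρ : V_n∖{0} → R be a map. Then ρ is A-reciprocal if and only if ρ is 𝔽_q-reciprocal and t·ρ(t·v) = Σ_{v'∈V_1} ρ(v−v') holds in R for all v ∈ V_n∖V_1. (Lemma 3.1 of the paper.) -/
open Polynomial

noncomputable section

set_option synthInstance.maxHeartbeats 1000000
set_option maxHeartbeats 1000000

variable (Fq : Type) [Field Fq] [Fintype Fq]

/-- The quotient ring `A/(t^n)` where `A = 𝔽_q[t]` and `t` is the variable `X`. -/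
abbrev AMod (n : ℕ) : Type := Polynomial Fq ⧸ Ideal.span {(Polynomial.X : Polynomial Fq) ^ n}

/-- `V_n = (t^{-n}A/A)^{⊕ r}`, identified with `(A/(t^n))^{⊕ r}` via multiplication by `t^n`. -/
abbrev Vmod (r n : ℕ) : Type := Fin r → AMod Fq n

/-- The `t^ν`-torsion submodule `V_ν ⊆ V_n` (as a subset). -/
def tors (r n ν : ℕ) : Set (Vmod Fq r n) :=
  {v | (Polynomial.X : Polynomial Fq) ^ ν • v = 0}

variable {R : Type} [CommRing R] [Algebra (RatFunc Fq) R]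

/-- An `𝔽_q`-reciprocal map `V_n∖{0} → R` (encoded as a total function whose values at `0`
are irrelevant): (a) `ρ(v)ρ(w) = ρ(v+w)(ρ(v)+ρ(w))` whenever `v, w, v+w ≠ 0`, and
(b) `α ρ(αv) = ρ(v)` for all `α ∈ 𝔽_q^×` and `v ≠ 0`. -/
def IsFqReciprocal {r n : ℕ} (ρ : Vmod Fq r n → R) : Prop :=
  (∀ v w : Vmod Fq r n, v ≠ 0 → w ≠ 0 → v + w ≠ 0 →
    ρ v * ρ w = ρ (v + w) * (ρ v + ρ w)) ∧
  (∀ (α : Fqˣ) (v : Vmod Fq r n), v ≠ 0 →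
    algebraMap (RatFunc Fq) R
        (algebraMap (Polynomial Fq) (RatFunc Fq) (Polynomial.C (α : Fq))) *
      ρ ((Polynomial.C (α : Fq) : Polynomial Fq) • v) = ρ v)

/-- An `A`-reciprocal map `V_n∖{0} → R`: condition (a) as above, together with
(b') `a ρ(av) = ∑_{v' ∈ V_ν} ρ(v - v')` for every divisor `a = α t^ν` of `t^n`
(`α ∈ 𝔽_q^×`, `0 ≤ ν ≤ n`) and every `v ∈ V_n∖V_ν`. -/
def IsAReciprocal {r n : ℕ} (ρ : Vmod Fq r n → R) : Prop :=
  (∀ v w : Vmod Fq r n, v ≠ 0 → w ≠ 0 → v + w ≠ 0 →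
    ρ v * ρ w = ρ (v + w) * (ρ v + ρ w)) ∧
  (∀ (α : Fqˣ) (ν : ℕ), ν ≤ n → ∀ v : Vmod Fq r n, v ∉ tors Fq r n ν →
    algebraMap (RatFunc Fq) R
        (algebraMap (Polynomial Fq) (RatFunc Fq)
          (Polynomial.C (α : Fq) * Polynomial.X ^ ν)) *
      ρ ((Polynomial.C (α : Fq) * Polynomial.X ^ ν : Polynomial Fq) • v)
    = ∑ᶠ v' ∈ tors Fq r n ν, ρ (v - v'))

instance instFinAMod (n : ℕ) : Finite (AMod Fq n) := by
  have h : AMod Fq n = AdjoinRoot ((X : Polynomial Fq) ^ n) := rfl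
  rw [h]
  have hf : ((X : Polynomial Fq) ^ n) ≠ 0 := pow_ne_zero n X_ne_zero
  have : Module.Finite Fq (AdjoinRoot ((X : Polynomial Fq) ^ n)) :=
    (AdjoinRoot.powerBasis hf).finite
  exact Module.finite_of_finite Fq

lemma mem_tors {r n ν : ℕ} {v : Vmod Fq r n} :
    v ∈ tors Fq r n ν ↔ (X : Polynomial Fq) ^ ν • v = 0 := Iff.rfl

lemma tors_mono {r n ν μ : ℕ} (h : ν ≤ μ) : tors Fq r n ν ⊆ tors Fq r n μ := by
  intro v hv
  rw [mem_tors] at hv ⊢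
  have : (X : Polynomial Fq) ^ μ = X ^ (μ - ν) * X ^ ν := by
    rw [← pow_add]; congr 1; omega
  rw [this, mul_smul, hv, smul_zero]

lemma tors_add {r n ν : ℕ} {v w : Vmod Fq r n} (hv : v ∈ tors Fq r n ν)
    (hw : w ∈ tors Fq r n ν) : v + w ∈ tors Fq r n ν := by
  rw [mem_tors] at hv hw ⊢
  rw [smul_add, hv, hw, add_zero]

lemma tors_zero (r n : ℕ) : tors Fq r n 0 = {0} := by
  ext v; simp [tors]

-- key surjectivity: any ν-torsion element (ν+1 ≤ n) is divisible by X within (ν+1)-torsion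
lemma exists_preimage {r n ν : ℕ} (hν : ν + 1 ≤ n) {w : Vmod Fq r n}
    (hw : w ∈ tors Fq r n ν) :
    ∃ u : Vmod Fq r n, u ∈ tors Fq r n (ν + 1) ∧ (X : Polynomial Fq) • u = w := by
  have hw' : w ∈ tors Fq r n (n - 1) := tors_mono Fq (by omega) hw
  rw [mem_tors] at hw'
  have hcomp : ∀ i : Fin r, ∃ y : AMod Fq n, (X : Polynomial Fq) • y = w i := by
    intro i
    obtain ⟨p, hp⟩ := Ideal.Quotient.mk_surjective (I := Ideal.span {(X : Polynomial Fq) ^ n}) (w i)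
    have h0 : (X : Polynomial Fq) ^ (n - 1) • w i = 0 := congrFun hw' i
    rw [← hp] at h0
    have h0' : Ideal.Quotient.mk (Ideal.span {(X : Polynomial Fq) ^ n})
        ((X : Polynomial Fq) ^ (n - 1) * p) = 0 := h0
    rw [Ideal.Quotient.eq_zero_iff_mem, Ideal.mem_span_singleton] at h0'
    have hxn : (X : Polynomial Fq) ^ n = X ^ (n - 1) * X := by
      rw [← pow_succ]; congr 1; omega
    rw [hxn] at h0'
    have hdvd : (X : Polynomial Fq) ∣ p :=
      (mul_dvd_mul_iff_left (pow_ne_zero (n-1) (X_ne_zero (R := Fq)))).mp h0'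
    obtain ⟨q, hq⟩ := hdvd
    refine ⟨Ideal.Quotient.mk _ q, ?_⟩
    rw [← hp, hq]
    rfl
  choose y hy using hcomp
  refine ⟨y, ?_, funext hy⟩
  rw [mem_tors]
  have : (X : Polynomial Fq) ^ (ν + 1) • y = (X : Polynomial Fq) ^ ν • ((X : Polynomial Fq) • y) := by
    rw [← mul_smul, ← pow_succ]
  rw [this]
  have h2 : (X : Polynomial Fq) • y = w := funext hy
  rw [h2]
  exact hw

variable {R : Type} [CommRing R] [Algebra (RatFunc Fq) R]

lemma key {r n : ℕ} (ρ : Vmod Fq r n → R)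
    (ht : ∀ v : Vmod Fq r n, v ∉ tors Fq r n 1 →
      algebraMap (RatFunc Fq) R (algebraMap (Polynomial Fq) (RatFunc Fq) (X : Polynomial Fq)) *
        ρ ((X : Polynomial Fq) • v) = ∑ᶠ v' ∈ tors Fq r n 1, ρ (v - v'))
    (ν : ℕ) (hν : ν ≤ n) (v : Vmod Fq r n) (hv : v ∉ tors Fq r n ν) :
    algebraMap (RatFunc Fq) R (algebraMap (Polynomial Fq) (RatFunc Fq)
        ((X : Polynomial Fq) ^ ν)) * ρ (((X : Polynomial Fq) ^ ν) • v)
      = ∑ᶠ w ∈ tors Fq r n ν, ρ (v - w) := by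
  induction ν generalizing v with
  | zero =>
      rw [tors_zero, pow_zero, map_one, map_one, one_mul, one_smul,
        finsum_mem_singleton, sub_zero]
  | succ ν ih =>
      classical
      -- choice of preimages under multiplication by X
      have hch : ∀ w : Vmod Fq r n, ∃ u : Vmod Fq r n,
          w ∈ tors Fq r n ν → u ∈ tors Fq r n (ν + 1) ∧ (X : Polynomial Fq) • u = w := by
        intro w
        by_cases hw : w ∈ tors Fq r n ν
        · obtain ⟨u, h1, h2⟩ := exists_preimage Fq hν hw
          exact ⟨u, fun _ => ⟨h1, h2⟩⟩
        · exact ⟨0, fun h => absurd h hw⟩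
      choose u hu using hch
      have hXv : (X : Polynomial Fq) • v ∉ tors Fq r n ν := by
        intro h
        apply hv
        rw [mem_tors] at h ⊢
        rw [pow_succ, mul_smul]
        exact h
      have hsplit : algebraMap (RatFunc Fq) R (algebraMap (Polynomial Fq) (RatFunc Fq)
          ((X : Polynomial Fq) ^ (ν + 1))) * ρ (((X : Polynomial Fq) ^ (ν + 1)) • v)
          = algebraMap (RatFunc Fq) R (algebraMap (Polynomial Fq) (RatFunc Fq)
              (X : Polynomial Fq)) *
            (algebraMap (RatFunc Fq) R (algebraMap (Polynomial Fq) (RatFunc Fq)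
              ((X : Polynomial Fq) ^ ν)) *
              ρ (((X : Polynomial Fq) ^ ν) • ((X : Polynomial Fq) • v))) := by
        rw [pow_succ, map_mul, map_mul, mul_smul]
        ring
      rw [hsplit, ih (by omega) _ hXv]
      -- convert finsums to finset sums
      have hfinν := Set.toFinite (tors Fq r n ν)
      have hfin1 := Set.toFinite (tors Fq r n 1)
      have hfinν1 := Set.toFinite (tors Fq r n (ν + 1))
      rw [finsum_mem_eq_finite_toFinset_sum _ hfinν,
        finsum_mem_eq_finite_toFinset_sum _ hfinν1, Finset.mul_sum]
      -- fiberwise decomposition of RHS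
      have hmap : ∀ z ∈ hfinν1.toFinset, (X : Polynomial Fq) • z ∈ hfinν.toFinset := by
        intro z hz
        rw [Set.Finite.mem_toFinset] at hz ⊢
        rw [mem_tors] at hz ⊢
        rw [← mul_smul, ← pow_succ]
        exact hz
      rw [← Finset.sum_fiberwise_of_maps_to hmap (fun z => ρ (v - z))]
      refine Finset.sum_congr rfl ?_
      intro w hw
      rw [Set.Finite.mem_toFinset] at hw
      obtain ⟨hu1, hu2⟩ := hu w hw
      -- rewrite the term using ht at v - u w
      have hvu : v - u w ∉ tors Fq r n 1 := by
        intro h1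
        apply hv
        have : v = (v - u w) + u w := by ring
        rw [this]
        exact tors_add Fq (tors_mono Fq (by omega) h1) hu1
      have hterm : (X : Polynomial Fq) • v - w = (X : Polynomial Fq) • (v - u w) := by
        rw [smul_sub, hu2]
      rw [hterm, ht _ hvu, finsum_mem_eq_finite_toFinset_sum _ hfin1]
      -- now a bijection between tors 1 and the fiber over w
      refine Finset.sum_nbij' (fun u' => u w + u') (fun z => z - u w) ?_ ?_ ?_ ?_ ?_
      · intro u' hu'
        rw [Set.Finite.mem_toFinset] at hu'
        rw [Finset.mem_filter, Set.Finite.mem_toFinset]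
        constructor
        · exact tors_add Fq hu1 (tors_mono Fq (by omega) hu')
        · rw [smul_add, hu2]
          have : (X : Polynomial Fq) • u' = 0 := by
            have := (mem_tors Fq).mp hu'
            rwa [pow_one] at this
          rw [this, add_zero]
      · intro z hz
        rw [Finset.mem_filter, Set.Finite.mem_toFinset] at hz
        rw [Set.Finite.mem_toFinset, mem_tors, pow_one, smul_sub, hz.2, hu2, sub_self]
      · intro u' _; exact add_sub_cancel_left _ _
      · intro z _; exact add_sub_cancel _ _
      · intro u' _
        rw [sub_sub]
/-- **Lemma 3.1**: a map `ρ : V_n∖{0} → R` is `A`-reciprocal if and only if it is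
`𝔽_q`-reciprocal and satisfies `t ρ(tv) = ∑_{v' ∈ V_1} ρ(v - v')` for all `v ∈ V_n∖V_1`. -/
theorem statement0 (Fq : Type) [Field Fq] [Fintype Fq] (r n : ℕ) (hr : 1 ≤ r) (hn : 1 ≤ n)
    (R : Type) [CommRing R] [Algebra (RatFunc Fq) R] (ρ : Vmod Fq r n → R) :
    IsAReciprocal Fq ρ ↔
      (IsFqReciprocal Fq ρ ∧
        ∀ v : Vmod Fq r n, v ∉ tors Fq r n 1 →
          algebraMap (RatFunc Fq) R
              (algebraMap (Polynomial Fq) (RatFunc Fq) (Polynomial.X : Polynomial Fq)) *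
            ρ ((Polynomial.X : Polynomial Fq) • v)
          = ∑ᶠ v' ∈ tors Fq r n 1, ρ (v - v')) := by
  constructor
  · rintro ⟨ha, hb⟩
    refine ⟨⟨ha, ?_⟩, ?_⟩
    · intro α v hv0
      have hv : v ∉ tors Fq r n 0 := by
        rw [tors_zero]
        simpa using hv0
      have h := hb α 0 (Nat.zero_le n) v hv
      rw [tors_zero, finsum_mem_singleton, sub_zero, pow_zero, mul_one] at h
      exact h
    · intro v hv
      have h := hb 1 1 hn v hv
      simpa using h
  · rintro ⟨⟨ha, hb⟩, ht⟩
    refine ⟨ha, ?_⟩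
    intro α ν hν v hv
    have hne : (X : Polynomial Fq) ^ ν • v ≠ 0 := fun h => hv ((mem_tors Fq).mpr h)
    have hscale := hb α ((X : Polynomial Fq) ^ ν • v) hne
    calc algebraMap (RatFunc Fq) R
          (algebraMap (Polynomial Fq) (RatFunc Fq)
            (Polynomial.C (α : Fq) * Polynomial.X ^ ν)) *
        ρ ((Polynomial.C (α : Fq) * Polynomial.X ^ ν : Polynomial Fq) • v)
        = algebraMap (RatFunc Fq) R
            (algebraMap (Polynomial Fq) (RatFunc Fq) ((X : Polynomial Fq) ^ ν)) *
          (algebraMap (RatFunc Fq) R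
            (algebraMap (Polynomial Fq) (RatFunc Fq) (Polynomial.C (α : Fq))) *
            ρ ((Polynomial.C (α : Fq) : Polynomial Fq) • ((X : Polynomial Fq) ^ ν • v))) := by
          rw [map_mul, map_mul, mul_smul]
          ring
      _ = algebraMap (RatFunc Fq) R
            (algebraMap (Polynomial Fq) (RatFunc Fq) ((X : Polynomial Fq) ^ ν)) *
          ρ (((X : Polynomial Fq) ^ ν) • v) := by rw [hscale]
      _ = ∑ᶠ v' ∈ tors Fq r n ν, ρ (v - v') := key Fq ρ ht ν hν v hv

end
end

section
/- Each f_k (1 ≤ k ≤ r) is a nonzero element of K_V, and RS_V equals the 𝔽_q-subalgebra of K_V generated by R_V together with the inverses f_1^{−1},…,f_r^{−1}; in short, RS_V = R_V[f_1^{−1},…,f_r^{−1}]. (Proposition 1.31 of the paper.) -/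
noncomputable section

set_option synthInstance.maxHeartbeats 1000000
set_option maxHeartbeats 1000000

variable (Fq : Type) [Field Fq] [Fintype Fq]

/-- The field `K_V`, the quotient field of the symmetric algebra of an `r`-dimensional
`𝔽_q`-vector space `V`, realized via a choice of basis as a rational function field. -/
abbrev KV (r : ℕ) : Type := FractionRing (MvPolynomial (Fin r) Fq)

variable {V : Type} [AddCommGroup V] [Module Fq V]

/-- The canonical embedding `V → Sym(V) → K_V`, written in terms of the basis `b`. -/
def embB {r : ℕ} (b : Module.Basis (Fin r) Fq V) (v : V) : KV Fq r :=
  algebraMap (MvPolynomial (Fin r) Fq) (KV Fq r)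
    (∑ i : Fin r, MvPolynomial.C (b.repr v i) * MvPolynomial.X i)

/-- `1/v ∈ K_V` (with the convention `1/0 = 0`). -/
def ooB {r : ℕ} (b : Module.Basis (Fin r) Fq V) (v : V) : KV Fq r := (embB Fq b v)⁻¹

/-- `R_V`: the `𝔽_q`-subalgebra of `K_V` generated by the `1/v` for `v ∈ V∖{0}`. -/
def RVB {r : ℕ} (b : Module.Basis (Fin r) Fq V) : Subalgebra Fq (KV Fq r) :=
  Algebra.adjoin Fq (Set.range (ooB Fq b))

instance {r : ℕ} (b : Module.Basis (Fin r) Fq V) : CommRing (RVB Fq b) :=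
  Subalgebra.toCommRing _

instance {r : ℕ} (b : Module.Basis (Fin r) Fq V) : Algebra Fq (RVB Fq b) :=
  Subalgebra.algebra _

/-- `1/v` as an element of `R_V`. -/
def gB {r : ℕ} (b : Module.Basis (Fin r) Fq V) (v : V) : RVB Fq b :=
  ⟨ooB Fq b v, Algebra.subset_adjoin (Set.mem_range_self v)⟩

/-- The subspace `V_k = 𝔽_q X_1 + ⋯ + 𝔽_q X_k` spanned by the first `k` basis vectors. -/
def Vk {r : ℕ} (b : Module.Basis (Fin r) Fq V) (k : ℕ) : Submodule Fq V :=
  Submodule.span Fq (b '' {i : Fin r | (i : ℕ) < k})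

/-- `f_k = ∑_{w ∈ V_{k-1}} 1/(X_k + w) ∈ R_V` (with `0`-indexed `k`, so `fB Fq b k` is the
paper's `f_{k+1}`). -/
def fB {r : ℕ} (b : Module.Basis (Fin r) Fq V) (k : Fin r) : RVB Fq b :=
  ∑ᶠ w ∈ (Vk Fq b (k : ℕ) : Set V), gB Fq b (b k + w)

/-- The set `E_k = {1/(X_k + w) : w ∈ V_{k-1}} ⊆ R_V` (with `0`-indexed `k`). -/
def EB {r : ℕ} (b : Module.Basis (Fin r) Fq V) (k : Fin r) : Set (RVB Fq b) :=
  {x | ∃ w ∈ (Vk Fq b (k : ℕ) : Set V), x = gB Fq b (b k + w)}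

/-- The set `Δ_k = {1/(X_k + w) : w ∈ V_{k-1}∖{0}} ∪ {1} ⊆ R_V` (with `0`-indexed `k`). -/
def DB {r : ℕ} (b : Module.Basis (Fin r) Fq V) (k : Fin r) : Set (RVB Fq b) :=
  {x | ∃ w ∈ (Vk Fq b (k : ℕ) : Set V), w ≠ 0 ∧ x = gB Fq b (b k + w)} ∪ {1}

/-- `RS_V`: the `𝔽_q`-subalgebra of `K_V` generated by `R_V` and `S_V = Sym(V)`. -/
def RSVB {r : ℕ} (b : Module.Basis (Fin r) Fq V) : Subalgebra Fq (KV Fq r) :=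
  Algebra.adjoin Fq (Set.range (ooB Fq b) ∪ Set.range (embB Fq b))

end

/-!
For a finite additive subgroup `W` of a field and `x ∉ W`,
`∑_{w ∈ W} 1/(x + w) = c / P` with `c = ∏_{w ∈ W, w ≠ 0} w` and `P = ∏_{w ∈ W} (x + w)`.
Taking `W = V_{k-1}` and `x = X_k` shows `f_k ≠ 0` and `f_k⁻¹ = P · c⁻¹ ∈ RS_V`, as `P ∈ S_V` and
`c⁻¹ = ∏ 1/w ∈ R_V`. Conversely `X_k = f_k⁻¹ · c · ∏_{w ≠ 0} 1/(X_k + w)`, and `c` only involves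
`X_1, …, X_{k-1}`, so by induction on `k` every `X_k`, hence all of `S_V`, lies in
`R_V[f_1⁻¹, …, f_r⁻¹]`.
-/

open Finset Lagrange

section FiniteAdditiveSubgroup

variable {W K F : Type*} [AddCommGroup W] [Fintype W] [DecidableEq W] [Field K]
  [FunLike F W K] [AddMonoidHomClass F W K] {L : F} {x : K}

theorem prod_erase_zero_ne_zero (hL : Function.Injective L) : ∏ w ∈ univ.erase 0, L w ≠ 0 :=
  prod_ne_zero_iff.mpr fun _ hw => (map_ne_zero_iff L hL).mpr (ne_of_mem_erase hw)

/- With nodes `-L w`, all nodal weights equal `(∏_{w ≠ 0} L w)⁻¹`, since `u ↦ u - w` permutes `W`;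
the barycentric form of the interpolant of the constant `1` then gives the identity. -/
theorem sum_inv_add_eq_div (hL : Function.Injective L) (hx : ∀ w, x + L w ≠ 0) :
    ∑ w, (x + L w)⁻¹ = (∏ w ∈ univ.erase 0, L w) / ∏ w, (x + L w) := by
  have hinj : Set.InjOn (fun w => -L w) (univ : Finset W) :=
    fun _ _ _ _ h => hL (neg_injective h)
  have hweight (w : W) : nodalWeight univ (fun u => -L u) w = (∏ u ∈ univ.erase 0, L u)⁻¹ := by
    rw [nodalWeight, prod_inv_distrib]
    congr 1
    refine prod_equiv (Equiv.subRight w) (by simp [sub_eq_zero]) fun u _ => ?_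
    simp [map_sub, neg_add_eq_sub]
  have hbary := eval_interpolate_not_at_node (s := univ) (v := fun u => -L u) (x := x) 1
    fun w _ h => hx w (by simp [h])
  simp only [interpolate_one hinj univ_nonempty, Polynomial.eval_one, eval_nodal, hweight,
    sub_neg_eq_add, Pi.one_apply, mul_one, ← mul_sum] at hbary
  have hP : ∏ w, (x + L w) ≠ 0 := prod_ne_zero_iff.mpr fun w _ => hx w
  have hc := prod_erase_zero_ne_zero hL
  rw [eq_comm, mul_left_comm, inv_mul_eq_one₀ hc] at hbary
  rw [eq_div_iff hP, hbary, mul_comm]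

theorem sum_inv_add_ne_zero (hL : Function.Injective L) (hx : ∀ w, x + L w ≠ 0) :
    ∑ w, (x + L w)⁻¹ ≠ 0 := by
  rw [sum_inv_add_eq_div hL hx]
  exact div_ne_zero (prod_erase_zero_ne_zero hL) (prod_ne_zero_iff.mpr fun w _ => hx w)

theorem inv_sum_inv_add_eq_div (hL : Function.Injective L) (hx : ∀ w, x + L w ≠ 0) :
    (∑ w, (x + L w)⁻¹)⁻¹ = (∏ w, (x + L w)) / ∏ w ∈ univ.erase 0, L w := by
  rw [sum_inv_add_eq_div hL hx, inv_div]

theorem eq_inv_sum_inv_add_mul (hL : Function.Injective L) (hx : ∀ w, x + L w ≠ 0) :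
    x = (∑ w, (x + L w)⁻¹)⁻¹ * (∏ w ∈ univ.erase 0, L w) * ∏ w ∈ univ.erase 0, (x + L w)⁻¹ := by
  have hc := prod_erase_zero_ne_zero hL
  have hP : ∏ w ∈ univ.erase 0, (x + L w) ≠ 0 := prod_ne_zero_iff.mpr fun w _ => hx w
  rw [inv_sum_inv_add_eq_div hL hx, ← mul_prod_erase univ _ (mem_univ 0), map_zero, add_zero,
    prod_inv_distrib]
  field_simp

end FiniteAdditiveSubgroup

section BasisEmbedding

variable {Fq V : Type} [Field Fq] [AddCommGroup V] [Module Fq V] {r : ℕ}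
  (b : Module.Basis (Fin r) Fq V)

noncomputable def embL : V →ₗ[Fq] KV Fq r :=
  (IsScalarTower.toAlgHom Fq (MvPolynomial (Fin r) Fq) (KV Fq r)).toLinearMap ∘ₗ
    Finsupp.linearCombination Fq MvPolynomial.X ∘ₗ b.repr.toLinearMap

theorem embL_apply (v : V) : embL b v = embB Fq b v := by
  simp [embL, embB, Finsupp.linearCombination_apply, Finsupp.sum_fintype,
    MvPolynomial.smul_eq_C_mul]

theorem embL_injective : Function.Injective (embL b) := by
  rw [embL, LinearMap.coe_comp, LinearMap.coe_comp]
  exact (IsFractionRing.injective (MvPolynomial (Fin r) Fq) (KV Fq r)).comp <|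
    Function.Injective.comp (MvPolynomial.linearIndependent_X (Fin r) Fq) b.repr.injective

theorem basis_notMem_Vk (k : Fin r) : b k ∉ Vk Fq b k :=
  b.linearIndependent.notMem_span_image (lt_irrefl (k : ℕ))

theorem embL_comp_subtype_injective (p : Submodule Fq V) :
    Function.Injective (embL b ∘ₗ p.subtype) := by
  rw [LinearMap.coe_comp]
  exact (embL_injective b).comp p.injective_subtype

theorem embL_basis_add_ne_zero (k : Fin r) (w : Vk Fq b k) :
    embL b (b k) + (embL b ∘ₗ (Vk Fq b k).subtype) w ≠ 0 := by
  rw [LinearMap.comp_apply, Submodule.subtype_apply, ← map_add,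
    map_ne_zero_iff _ (embL_injective b)]
  intro h
  exact basis_notMem_Vk b k (eq_neg_of_add_eq_zero_left h ▸ neg_mem w.2)

theorem inv_embL_mem_RVB (v : V) : (embL b v)⁻¹ ∈ RVB Fq b :=
  Algebra.subset_adjoin ⟨v, by rw [ooB, embL_apply]⟩

theorem RVB_le_RSVB : RVB Fq b ≤ RSVB Fq b :=
  Algebra.adjoin_mono Set.subset_union_left

theorem embL_mem_RSVB (v : V) : embL b v ∈ RSVB Fq b :=
  Algebra.subset_adjoin (Or.inr ⟨v, (embL_apply b v).symm⟩)

theorem embL_mem_of_basis_mem {S : Submodule Fq (KV Fq r)} {s : Set (Fin r)}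
    (h : ∀ i ∈ s, embL b (b i) ∈ S) {v : V} (hv : v ∈ Submodule.span Fq (b '' s)) :
    embL b v ∈ S := by
  refine (Submodule.span_le (p := S.comap (embL b)) |>.mpr ?_) hv
  rintro _ ⟨i, hi, rfl⟩
  exact h i hi

end BasisEmbedding

section

variable {Fq V : Type} [Field Fq] [Finite Fq] [AddCommGroup V] [Module Fq V] {r : ℕ}
  (b : Module.Basis (Fin r) Fq V)

noncomputable instance (k : ℕ) : Fintype (Vk Fq b k) :=
  have : Module.Finite Fq V := .of_basis b
  have : Finite V := Module.finite_of_finite Fq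
  Fintype.ofFinite _

theorem coe_fB (k : Fin r) :
    (fB Fq b k : KV Fq r) =
      ∑ w : Vk Fq b k, (embL b (b k) + (embL b ∘ₗ (Vk Fq b k).subtype) w)⁻¹ := by
  rw [fB, ← finsum_set_coe_eq_finsum_mem]
  change ((∑ᶠ w : Vk Fq b k, gB Fq b (b k + w) : RVB Fq b) : KV Fq r) = _
  rw [finsum_eq_sum_of_fintype, AddSubmonoidClass.coe_finsetSum]
  refine sum_congr rfl fun w _ => ?_
  simp only [gB, ooB, ← embL_apply, map_add, LinearMap.comp_apply, Submodule.subtype_apply]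

theorem fB_ne_zero (k : Fin r) : (fB Fq b k : KV Fq r) ≠ 0 := by
  classical
  rw [coe_fB]
  exact sum_inv_add_ne_zero (embL_comp_subtype_injective b _) (embL_basis_add_ne_zero b k)

theorem inv_fB_mem_RSVB (k : Fin r) : (fB Fq b k : KV Fq r)⁻¹ ∈ RSVB Fq b := by
  classical
  rw [coe_fB, inv_sum_inv_add_eq_div (embL_comp_subtype_injective b _)
    (embL_basis_add_ne_zero b k), div_eq_mul_inv, ← prod_inv_distrib]
  refine mul_mem (prod_mem fun w _ => ?_)
    (prod_mem fun w _ => RVB_le_RSVB b (inv_embL_mem_RVB b _))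
  rw [LinearMap.comp_apply, Submodule.subtype_apply, ← map_add]
  exact embL_mem_RSVB b _

theorem embL_basis_mem {A : Subalgebra Fq (KV Fq r)} (hR : RVB Fq b ≤ A)
    (hf : ∀ k, (fB Fq b k : KV Fq r)⁻¹ ∈ A) (k : Fin r) : embL b (b k) ∈ A := by
  induction k using WellFoundedLT.induction with
  | _ k ih =>
    classical
    have hL := embL_comp_subtype_injective b (Vk Fq b k)
    have hx := embL_basis_add_ne_zero b k
    rw [eq_inv_sum_inv_add_mul hL hx, ← coe_fB]
    refine mul_mem (mul_mem (hf k) (prod_mem fun w _ => ?_)) (prod_mem fun w _ => hR ?_)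
    · exact embL_mem_of_basis_mem b (S := Subalgebra.toSubmodule A) (fun i hi => ih i hi) w.2
    · rw [LinearMap.comp_apply, Submodule.subtype_apply, ← map_add]
      exact inv_embL_mem_RVB b _

end

theorem statement14_general (Fq : Type) [Field Fq] [Fintype Fq]
    (V : Type) [AddCommGroup V] [Module Fq V]
    (r : ℕ) (b : Module.Basis (Fin r) Fq V) :
    (∀ k : Fin r, (fB Fq b k : KV Fq r) ≠ 0) ∧
    RSVB Fq b = Algebra.adjoin Fq
      ((RVB Fq b : Set (KV Fq r)) ∪ Set.range (fun k : Fin r => (fB Fq b k : KV Fq r)⁻¹)) := by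
  set A := Algebra.adjoin Fq
    ((RVB Fq b : Set (KV Fq r)) ∪ Set.range (fun k : Fin r => (fB Fq b k : KV Fq r)⁻¹))
  have hR : RVB Fq b ≤ A := fun x hx => Algebra.subset_adjoin (Or.inl hx)
  have hf (k : Fin r) : (fB Fq b k : KV Fq r)⁻¹ ∈ A := Algebra.subset_adjoin (Or.inr ⟨k, rfl⟩)
  refine ⟨fB_ne_zero b, le_antisymm (Algebra.adjoin_le ?_) (Algebra.adjoin_le ?_)⟩
  · rintro _ (⟨v, rfl⟩ | ⟨v, rfl⟩)
    · exact hR (Algebra.subset_adjoin ⟨v, rfl⟩)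
    · rw [← embL_apply]
      exact embL_mem_of_basis_mem b (S := Subalgebra.toSubmodule A) (s := Set.univ)
        (fun i _ => embL_basis_mem b hR hf i) (by rw [Set.image_univ, b.span_eq]; trivial)
  · rintro _ (hx | ⟨k, rfl⟩)
    · exact RVB_le_RSVB b hx
    · exact inv_fB_mem_RSVB b k

/-- **Proposition 1.31**: each `f_k` is nonzero in `K_V` and
`RS_V = R_V[f_1^{-1}, …, f_r^{-1}]`. -/
theorem statement14 (Fq : Type) [Field Fq] [Fintype Fq]
    (V : Type) [AddCommGroup V] [Module Fq V]
    (r : ℕ) (hr : 1 ≤ r) (b : Module.Basis (Fin r) Fq V) :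
    (∀ k : Fin r, (fB Fq b k : KV Fq r) ≠ 0) ∧
    RSVB Fq b = Algebra.adjoin Fq
      ((RVB Fq b : Set (KV Fq r)) ∪ Set.range (fun k : Fin r => (fB Fq b k : KV Fq r)⁻¹)) :=
  statement14_general Fq V r b
end

section
/- Let p : V → V'' be a surjective 𝔽_q-linear map of finite-dimensional 𝔽_q-vector spaces, and let ρ : V∖{0} → R be an 𝔽_q-reciprocal map. Then the map p_*ρ : V''∖{0} → R defined by (p_*ρ)(v'') := Σ_{v∈p^{−1}(v'')} ρ(v) is 𝔽_q-reciprocal. (Proposition-Definition 1.11 of the paper.) -/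
noncomputable section

/-- An `𝔽_q`-reciprocal map `V∖{0} → R` (encoded as a total function whose value at `0`
is irrelevant): (a) `ρ(v)ρ(w) = ρ(v+w)(ρ(v)+ρ(w))` whenever `v, w, v+w ≠ 0`, and
(b) `α ρ(αv) = ρ(v)` for all `α ∈ 𝔽_q^×` and `v ≠ 0`. -/
def IsFqRecip (Fq : Type) [Field Fq] {V R : Type} [AddCommGroup V] [Module Fq V]
    [CommRing R] [Algebra Fq R] (ρ : V → R) : Prop :=
  (∀ v w : V, v ≠ 0 → w ≠ 0 → v + w ≠ 0 → ρ v * ρ w = ρ (v + w) * (ρ v + ρ w)) ∧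
  (∀ (α : Fqˣ) (v : V), v ≠ 0 →
    algebraMap Fq R (α : Fq) * ρ ((α : Fq) • v) = ρ v)

/-- The polynomial `e_ρ(X) = X ⬝ ∏_{v ∈ V∖{0}} (1 - ρ(v) X) ∈ R[X]`. -/
def eRho {Fq V R : Type} [Field Fq] [AddCommGroup V] [Module Fq V]
    [CommRing R] [Algebra Fq R] (ρ : V → R) : Polynomial R :=
  Polynomial.X * ∏ᶠ v ∈ {v : V | v ≠ 0}, (1 - Polynomial.C (ρ v) * Polynomial.X)

/-- **Proposition-Definition 1.11**: the pushforward
`(p_*ρ)(v'') = ∑_{v ∈ p^{-1}(v'')} ρ(v)` of an `𝔽_q`-reciprocal map along a surjective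
`𝔽_q`-linear map is `𝔽_q`-reciprocal. -/
theorem statement16 (Fq : Type) [Field Fq] [Fintype Fq]
    (V V'' : Type) [AddCommGroup V] [Module Fq V] [FiniteDimensional Fq V]
    [AddCommGroup V''] [Module Fq V''] [FiniteDimensional Fq V'']
    (R : Type) [CommRing R] [Algebra Fq R]
    (p : V →ₗ[Fq] V'') (hp : Function.Surjective p)
    (ρ : V → R) (h : IsFqRecip Fq ρ) :
    IsFqRecip Fq (fun v'' : V'' => ∑ᶠ v ∈ {v : V | p v = v''}, ρ v) := by
  classical
  have hfinV : Finite V := Module.finite_of_finite Fq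
  have : Fintype V := Fintype.ofFinite V
  set fib : V'' → Finset V := fun x => Finset.univ.filter (fun v => p v = x) with hfibdef
  have hmem : ∀ (x : V'') (v : V), v ∈ fib x ↔ p v = x := by
    intro x v; simp [hfibdef]
  have key : ∀ x : V'', (∑ᶠ v ∈ {v : V | p v = x}, ρ v) = ∑ v ∈ fib x, ρ v := by
    intro x
    rw [← finsum_mem_coe_finset]
    congr 1
    ext v; simp [hmem]
  have hne : ∀ (x : V''), x ≠ 0 → ∀ v ∈ fib x, v ≠ 0 := by
    intro x hx v hv h0
    apply hx
    rw [← (hmem x v).1 hv, h0, map_zero]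
  -- reindexing lemma
  have reindex : ∀ (x y : V'') (v : V) (f : V → R), p v = x →
      ∑ w ∈ fib y, f (v + w) = ∑ u ∈ fib (x + y), f u := by
    intro x y v f hv
    apply Finset.sum_nbij' (i := fun w => v + w) (j := fun u => u - v)
    · intro w hw
      rw [hmem] at hw ⊢
      simp [hv, hw]
    · intro u hu
      rw [hmem] at hu ⊢
      simp [hu, hv]
    · intro w _; abel
    · intro u _; abel
    · intro w _; rfl
  constructor
  · intro a b ha hb hab
    simp only [key]
    have hterm : ∀ v ∈ fib a, ∀ w ∈ fib b,
        ρ v * ρ w = ρ (v + w) * ρ v + ρ (v + w) * ρ w := by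
      intro v hv w hw
      have h1 : v ≠ 0 := hne a ha v hv
      have h2 : w ≠ 0 := hne b hb w hw
      have h3 : v + w ≠ 0 := by
        intro h0
        apply hab
        rw [← (hmem a v).1 hv, ← (hmem b w).1 hw, ← map_add, h0, map_zero]
      rw [h.1 v w h1 h2 h3, mul_add]
    rw [Finset.sum_mul_sum]
    calc ∑ v ∈ fib a, ∑ w ∈ fib b, ρ v * ρ w
        = ∑ v ∈ fib a, ∑ w ∈ fib b, (ρ (v + w) * ρ v + ρ (v + w) * ρ w) := by
          apply Finset.sum_congr rfl
          intro v hv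
          exact Finset.sum_congr rfl fun w hw => hterm v hv w hw
      _ = (∑ v ∈ fib a, ∑ w ∈ fib b, ρ (v + w) * ρ v)
          + ∑ v ∈ fib a, ∑ w ∈ fib b, ρ (v + w) * ρ w := by
          rw [← Finset.sum_add_distrib]
          exact Finset.sum_congr rfl fun v _ => Finset.sum_add_distrib
      _ = (∑ u ∈ fib (a + b), ρ u) * (∑ v ∈ fib a, ρ v + ∑ w ∈ fib b, ρ w) := by
          rw [mul_add]
          congr 1
          · rw [Finset.mul_sum]
            apply Finset.sum_congr rfl
            intro v hv
            rw [← Finset.sum_mul, reindex a b v ρ ((hmem a v).1 hv)]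
          · rw [Finset.sum_comm, Finset.mul_sum]
            apply Finset.sum_congr rfl
            intro w hw
            rw [← Finset.sum_mul]
            congr 1
            have := reindex b a w ρ ((hmem b w).1 hw)
            rw [add_comm b a] at this
            rw [← this]
            exact Finset.sum_congr rfl fun v _ => by rw [add_comm]
  · intro α x hx
    simp only [key]
    have bij : ∑ v ∈ fib ((α : Fq) • x), ρ v = ∑ u ∈ fib x, ρ ((α : Fq) • u) := by
      apply Finset.sum_nbij' (i := fun v => (α⁻¹ : Fq) • v) (j := fun u => (α : Fq) • u)
      · intro v hv
        rw [hmem] at hv ⊢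
        rw [map_smul, hv, smul_smul]
        simp
      · intro u hu
        rw [hmem] at hu ⊢
        rw [map_smul, hu]
      · intro v _; rw [smul_smul]; simp
      · intro u _; rw [smul_smul]; simp
      · intro v hv
        rw [smul_smul]
        simp
    rw [bij, Finset.mul_sum]
    apply Finset.sum_congr rfl
    intro u hu
    exact h.2 α u (hne x hx u hu)
end
end

section
/- Let ρ : V∖{0} → R be an 𝔽_q-reciprocal map. Then the polynomial e_ρ(X) := X·∏_{v∈V∖{0}} (1 − ρ(v)·X) ∈ R[X] is 𝔽_q-linear; that is, for every natural number k that is not a power of q, the coefficient of X^k in e_ρ is zero. (Proposition 1.15 of the paper.) -/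
noncomputable section

/-!
Pick `u ≠ 0`, put `L = 𝔽_q u` and `c = ρ u`. Reciprocity forces `ρ (α • u) = α⁻¹ c`, and on a
coset `w + L ≠ L` the values `x α = ρ (w + α • u)` satisfy `x α * x β = (α - β)⁻¹ c (x β - x α)`.
An identity proved by induction on the number of factors turns this into
`∏ α, (1 - x α X) = 1 - (∑ α, x α) E` with `E = X - c ^ (q - 1) X ^ q`, while
`X ∏ α ≠ 0, (1 - ρ (α • u) X) = E`. The coset sums form a reciprocal map `ρ̄` on `V ⧸ L`, hence
`e_ρ = e_ρ̄ ∘ E`, and induction on the dimension reduces the claim to the fact that polynomials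
supported on powers of `q` are closed under composition, `g ↦ g ^ q` being additive over `𝔽_q`.
-/

open Polynomial Finset

section PartialFractions

variable {ι A : Type*} [DecidableEq ι] [CommRing A]

-- For antisymmetric `κ` and invertible values, the hypothesis on `x` says
-- `1 / x β - 1 / x α = 1 / κ α β`, and `hκ` says the same of every `κ γ`.
theorem prod_one_sub_mul_eq_one_sub_sum (κ : ι → ι → A)
    (hκ : ∀ α β γ, α ≠ β → α ≠ γ → β ≠ γ → κ γ α * κ γ β = κ γ α * κ α β + κ γ β * κ β α)
    (t : A) (S : Finset ι) (x : ι → A)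
    (hx : ∀ α ∈ S, ∀ β ∈ S, α ≠ β → x α * x β = x α * κ α β + x β * κ β α) :
    ∏ α ∈ S, (1 - x α * t) = 1 - ∑ α ∈ S, x α * t * ∏ β ∈ S.erase α, (1 - κ α β * t) := by
  induction S using Finset.induction_on generalizing x with
  | empty => simp
  | @insert γ S hγ ih =>
    have hxS : ∀ α ∈ S, ∀ β ∈ S, α ≠ β → x α * x β = x α * κ α β + x β * κ β α :=
      fun α hα β hβ => hx α (mem_insert_of_mem hα) β (mem_insert_of_mem hβ)
    have hκγ : ∀ α ∈ S, ∀ β ∈ S, α ≠ β → κ γ α * κ γ β = κ γ α * κ α β + κ γ β * κ β α :=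
      fun α hα β hβ hαβ => hκ α β γ hαβ (ne_of_mem_of_not_mem hα hγ) (ne_of_mem_of_not_mem hβ hγ)
    have hterm : ∀ α ∈ S, x α * t * ∏ β ∈ (insert γ S).erase α, (1 - κ α β * t) =
        x α * t * ∏ β ∈ S.erase α, (1 - κ α β * t) +
          x γ * t * (κ γ α * t * ∏ β ∈ S.erase α, (1 - κ α β * t)) -
          x γ * t * (x α * t * ∏ β ∈ S.erase α, (1 - κ α β * t)) := by
      intro α hα
      have hαγ : α ≠ γ := ne_of_mem_of_not_mem hα hγ
      rw [erase_insert_of_ne hαγ.symm, prod_insert (fun h => hγ (mem_of_mem_erase h))]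
      linear_combination (t ^ 2 * ∏ β ∈ S.erase α, (1 - κ α β * t)) *
        hx γ (mem_insert_self γ S) α (mem_insert_of_mem hα) hαγ.symm
    rw [prod_insert hγ, sum_insert hγ, erase_insert hγ, ih x hxS, ih (κ γ) hκγ,
      sum_congr rfl hterm, sum_sub_distrib, sum_add_distrib, ← mul_sum, ← mul_sum]
    ring

end PartialFractions

namespace FiniteField

variable {K : Type*} [Field K] [Fintype K]

theorem prod_X_sub_C_eq_X_pow_card_sub_X : ∏ a : K, (X - C a) = X ^ Fintype.card K - X := by
  classical
  have h := prod_multiset_X_sub_C_of_monic_of_roots_card_eq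
    (monic_X_pow_sub (degree_X_le.trans_lt (by exact_mod_cast Fintype.one_lt_card)) :
      (X ^ Fintype.card K - X : K[X]).Monic)
    (by rw [roots_X_pow_card_sub_X, X_pow_card_sub_X_natDegree_eq K Fintype.one_lt_card]; rfl)
  rwa [roots_X_pow_card_sub_X] at h

theorem prod_one_sub_C_mul_X : ∏ a : K, (1 - C a * X) = 1 - X ^ (Fintype.card K - 1) := by
  classical
  have hunits : ∏ a ∈ univ.erase 0, (X - C a) = X ^ (Fintype.card K - 1) - (1 : K[X]) := by
    refine mul_left_cancel₀ (X_ne_zero (R := K)) ?_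
    have h := mul_prod_erase univ (fun a : K => X - C a) (mem_univ 0)
    rw [C_0, sub_zero] at h
    rw [h, prod_X_sub_C_eq_X_pow_card_sub_X, mul_sub, ← pow_succ',
      Nat.sub_add_cancel Fintype.card_pos, mul_one]
  have hneg : ∏ a ∈ univ.erase (0 : K), -a = -1 := by
    simpa [eval_prod, Nat.sub_ne_zero_of_lt Fintype.one_lt_card] using congrArg (eval 0) hunits
  calc ∏ a : K, (1 - C a * X) = ∏ a : K, (1 - C a⁻¹ * X) :=
        Fintype.prod_equiv (Equiv.inv K) _ _ (by simp)
    _ = ∏ a ∈ univ.erase 0, C (-a)⁻¹ * (X - C a) := by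
        rw [← prod_erase univ (f := fun a => 1 - C a⁻¹ * X) (a := 0) (by simp)]
        refine prod_congr rfl fun a ha => ?_
        rw [mul_sub, ← C_mul, inv_neg, neg_mul, inv_mul_cancel₀ (ne_of_mem_erase ha), C_neg, C_neg,
          C_1]
        ring
    _ = 1 - X ^ (Fintype.card K - 1) := by
        rw [prod_mul_distrib, ← map_prod, prod_inv_distrib, hneg, hunits]
        simp only [inv_neg, inv_one, C_neg, C_1]
        ring

variable {A : Type*} [CommRing A] [Algebra K A]

theorem prod_one_sub_algebraMap_mul (t : A) :
    ∏ a : K, (1 - algebraMap K A a * t) = 1 - t ^ (Fintype.card K - 1) := by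
  simpa [map_prod, Algebra.algebraMap_eq_smul_one, smul_mul_assoc] using
    congrArg (aeval t) (prod_one_sub_C_mul_X (K := K))

theorem prod_one_sub_mul_eq_one_sub_sum_mul (c t : A) (x : K → A)
    (hx : ∀ α β, α ≠ β → x α * x β =
      x α * (algebraMap K A (β - α)⁻¹ * c) + x β * (algebraMap K A (α - β)⁻¹ * c)) :
    ∏ α, (1 - x α * t) =
      1 - (∑ α, x α) * (t - c ^ (Fintype.card K - 1) * t ^ Fintype.card K) := by
  classical
  set κ : K → K → A := fun α β => algebraMap K A (β - α)⁻¹ * c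
  have hκ : ∀ α β γ, α ≠ β → α ≠ γ → β ≠ γ →
      κ γ α * κ γ β = κ γ α * κ α β + κ γ β * κ β α := by
    intro α β γ hαβ hαγ hβγ
    have key : (α - γ)⁻¹ * (β - γ)⁻¹ = (α - γ)⁻¹ * (β - α)⁻¹ + (β - γ)⁻¹ * (α - β)⁻¹ := by
      field_simp [sub_ne_zero.2 hαβ, sub_ne_zero.2 hαγ, sub_ne_zero.2 hβγ]
      ring
    have key' := congrArg (algebraMap K A) key
    simp only [map_mul, map_add] at key'
    linear_combination c ^ 2 * key'
  -- The factor `β = α` may be put back in since `(α - α)⁻¹ = 0`; then `β ↦ (β - α)⁻¹` permutes `K`.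
  have hline : ∀ α, ∏ β ∈ univ.erase α, (1 - κ α β * t) = 1 - (c * t) ^ (Fintype.card K - 1) := by
    intro α
    rw [prod_erase univ (by simp [κ]), ← prod_one_sub_algebraMap_mul]
    refine Fintype.prod_equiv ((Equiv.subRight α).trans (Equiv.inv K)) _ _ fun β => ?_
    simp only [κ, Equiv.trans_apply, Equiv.subRight_apply, Equiv.inv_apply, mul_assoc]
  have ht : t ^ Fintype.card K = t * t ^ (Fintype.card K - 1) := by
    rw [← pow_succ', Nat.sub_add_cancel Fintype.card_pos]
  rw [prod_one_sub_mul_eq_one_sub_sum κ hκ t univ x (fun α _ β _ => hx α β), sum_mul]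
  congr 1
  refine sum_congr rfl fun α _ => ?_
  rw [hline, mul_pow, ht]
  ring

end FiniteField

namespace Polynomial

variable {R : Type*} [CommRing R]

def IsQPolynomial (q : ℕ) (f : R[X]) : Prop :=
  ∀ k : ℕ, (∀ i : ℕ, k ≠ q ^ i) → f.coeff k = 0

theorem isQPolynomial_X (q : ℕ) : IsQPolynomial q (X : R[X]) := by
  intro k hk
  have hk1 : k ≠ 1 := by simpa using hk 0
  rw [coeff_X, if_neg hk1.symm]

theorem isQPolynomial_X_sub_C_mul_X_pow (q : ℕ) (a : R) : IsQPolynomial q (X - C a * X ^ q) := by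
  intro k hk
  have hk1 : k ≠ 1 := by simpa using hk 0
  have hkq : k ≠ q := by simpa using hk 1
  rw [coeff_sub, coeff_X, coeff_C_mul, coeff_X_pow, if_neg hk1.symm, if_neg hkq, mul_zero,
    sub_zero]

section FiniteField

variable {K : Type*} [Field K] [Fintype K] [Algebra K R]

local notation "q" => Fintype.card K

theorem pow_card_eq_map_expand (g : R[X]) :
    g ^ q = (expand R q g).map (FiniteField.frobeniusAlgHom K R) := by
  induction g using Polynomial.induction_on' with
  | add f g hf hg =>
    have h := map_add (FiniteField.frobeniusAlgHom K R[X]) f g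
    simp only [FiniteField.frobeniusAlgHom_apply] at h
    rw [h, hf, hg, map_add, Polynomial.map_add]
  | monomial n a =>
    rw [monomial_pow, expand_monomial, map_monomial]
    rfl

theorem coeff_pow_card (g : R[X]) (k : ℕ) :
    (g ^ q).coeff k = if q ∣ k then g.coeff (k / q) ^ q else 0 := by
  rw [pow_card_eq_map_expand, coeff_map, coeff_expand Fintype.card_pos]
  split_ifs <;> simp

theorem IsQPolynomial.pow_card {g : R[X]} (hg : IsQPolynomial q g) : IsQPolynomial q (g ^ q) := by
  intro k hk
  rw [coeff_pow_card]
  split_ifs with hdvd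
  · obtain ⟨m, rfl⟩ := hdvd
    rw [Nat.mul_div_cancel_left m Fintype.card_pos,
      hg m fun i hi => hk (i + 1) (by rw [hi, pow_succ']), zero_pow Fintype.card_ne_zero]
  · rfl

theorem IsQPolynomial.pow_card_pow {g : R[X]} (hg : IsQPolynomial q g) (i : ℕ) :
    IsQPolynomial q (g ^ q ^ i) := by
  induction i with
  | zero => simpa
  | succ i ih => simpa [pow_succ, pow_mul] using ih.pow_card

theorem IsQPolynomial.comp {f g : R[X]} (hf : IsQPolynomial q f) (hg : IsQPolynomial q g) :
    IsQPolynomial q (f.comp g) := by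
  intro k hk
  rw [comp_eq_sum_left, sum_def, finsetSum_coeff]
  refine sum_eq_zero fun n _ => ?_
  rw [coeff_C_mul]
  by_cases hn : ∀ i, n ≠ q ^ i
  · rw [hf n hn, zero_mul]
  · obtain ⟨i, rfl⟩ := not_forall_not.1 hn
    rw [hg.pow_card_pow i k hk, mul_zero]

end FiniteField

end Polynomial

section Fibers

variable (Fq : Type*) {V M : Type*} [DivisionRing Fq] [Fintype Fq] [AddCommGroup V] [Module Fq V]
  [Fintype V] [CommMonoid M]

theorem prod_filter_mk_eq_prod_add_smul {u w : V} [DecidableEq (V ⧸ Fq ∙ u)] (hu : u ≠ 0)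
    (g : V → M) {z : V ⧸ Fq ∙ u} (hw : Submodule.Quotient.mk w = z) :
    ∏ v with Submodule.Quotient.mk v = z, g v = ∏ α : Fq, g (w + α • u) := by
  refine (prod_nbij (fun α => w + α • u) (fun α _ => ?_)
    (fun α _ β _ hαβ => smul_left_injective Fq hu (add_left_cancel hαβ)) (fun v hv => ?_)
    (fun _ _ => rfl)).symm
  · rw [mem_filter, ← hw, Submodule.Quotient.eq]
    simpa using Submodule.smul_mem _ α (Submodule.mem_span_singleton_self u)
  · rw [coe_filter, ← hw, Set.mem_ofPred_eq, Submodule.Quotient.eq] at hv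
    obtain ⟨β, hβ⟩ := Submodule.mem_span_singleton.1 hv.2
    exact ⟨β, mem_coe.2 (mem_univ β), show w + β • u = v by rw [hβ]; abel⟩

end Fibers

section LineSum

variable (Fq : Type*) {V R : Type*} [Ring Fq] [Fintype Fq] [AddCommGroup V] [Module Fq V]
  [AddCommMonoid R]

def lineSum (ρ : V → R) (u w : V) : R := ∑ α : Fq, ρ (w + α • u)

open Classical in
def quotLineSum (ρ : V → R) (u : V) (z : V ⧸ Fq ∙ u) : R :=
  if z = 0 then 0 else lineSum Fq ρ u z.out

variable {Fq} {ρ : V → R} {u w : V}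

theorem lineSum_add_smul (β : Fq) : lineSum Fq ρ u (w + β • u) = lineSum Fq ρ u w :=
  Fintype.sum_equiv (Equiv.addLeft β) _ _ fun α => by
    rw [Equiv.coe_addLeft, add_smul, add_assoc]

theorem lineSum_eq_of_mk_eq {w' : V}
    (h : (Submodule.Quotient.mk w : V ⧸ Fq ∙ u) = Submodule.Quotient.mk w') :
    lineSum Fq ρ u w = lineSum Fq ρ u w' := by
  obtain ⟨β, hβ⟩ := Submodule.mem_span_singleton.1 ((Submodule.Quotient.eq _).1 h)
  rw [← lineSum_add_smul β (w := w'), hβ, add_sub_cancel]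

theorem quotLineSum_zero : quotLineSum Fq ρ u 0 = 0 := by
  rw [quotLineSum, if_pos rfl]

theorem quotLineSum_mk (hw : w ∉ Fq ∙ u) :
    quotLineSum Fq ρ u (Submodule.Quotient.mk w) = lineSum Fq ρ u w := by
  rw [quotLineSum, if_neg (mt (Submodule.Quotient.mk_eq_zero _).1 hw)]
  exact lineSum_eq_of_mk_eq (Submodule.Quotient.mk_out _)

end LineSum

section Reciprocal

variable {Fq V R : Type} [Field Fq] [AddCommGroup V] [Module Fq V] [CommRing R] [Algebra Fq R]
  {ρ : V → R} {u w : V}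

theorem eRho_eq_X_mul_prod [Fintype V] (h0 : ρ 0 = 0) :
    eRho (Fq := Fq) ρ = X * ∏ v, (1 - C (ρ v) * X) := by
  classical
  rw [eRho, finprod_mem_eq_prod_of_subset _ (t := univ.erase 0) (fun v hv => by simpa using hv.1)
    (fun v hv => by simpa using hv), prod_erase univ (by simp [h0])]

theorem eRho_congr {ρ' : V → R} (h' : ∀ v, v ≠ 0 → ρ' v = ρ v) :
    eRho (Fq := Fq) ρ' = eRho (Fq := Fq) ρ := by
  rw [eRho, eRho, finprod_mem_congr rfl fun v hv => by rw [h' v hv]]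

theorem add_smul_ne_zero_of_notMem_span (hw : w ∉ Fq ∙ u) (α : Fq) : w + α • u ≠ 0 := fun h =>
  hw (by
    rw [eq_neg_of_add_eq_zero_left h]
    exact neg_mem (Submodule.smul_mem _ _ (Submodule.mem_span_singleton_self u)))

namespace IsFqRecip

theorem congr (h : IsFqRecip Fq ρ) {ρ' : V → R} (h' : ∀ v, v ≠ 0 → ρ' v = ρ v) :
    IsFqRecip Fq ρ' := by
  refine ⟨fun v w hv hw hvw => ?_, fun α v hv => ?_⟩
  · rw [h' v hv, h' w hw, h' _ hvw]
    exact h.1 v w hv hw hvw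
  · rw [h' v hv, h' _ (smul_ne_zero α.ne_zero hv)]
    exact h.2 α v hv

theorem map_smul (h : IsFqRecip Fq ρ) {β : Fq} (hβ : β ≠ 0) {v : V} (hv : v ≠ 0) :
    ρ (β • v) = algebraMap Fq R β⁻¹ * ρ v := by
  rw [← h.2 (Units.mk0 β hβ) v hv, Units.val_mk0, ← mul_assoc, ← map_mul, inv_mul_cancel₀ hβ,
    map_one, one_mul]

theorem map_neg (h : IsFqRecip Fq ρ) {v : V} (hv : v ≠ 0) : ρ (-v) = -ρ v := by
  simpa using h.map_smul (neg_ne_zero.2 one_ne_zero) hv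

theorem map_smul_of_map_zero (h : IsFqRecip Fq ρ) (h0 : ρ 0 = 0) (β : Fq) (v : V) :
    ρ (β • v) = algebraMap Fq R β⁻¹ * ρ v := by
  rcases eq_or_ne β 0 with rfl | hβ
  · simp [h0]
  rcases eq_or_ne v 0 with rfl | hv
  · simp [h0]
  exact h.map_smul hβ hv

theorem mul_add_smul (h : IsFqRecip Fq ρ) (hu : u ≠ 0) (hw : w ∉ Fq ∙ u) {α β : Fq}
    (hαβ : α ≠ β) :
    ρ (w + α • u) * ρ (w + β • u) = ρ (w + α • u) * (algebraMap Fq R (β - α)⁻¹ * ρ u) +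
      ρ (w + β • u) * (algebraMap Fq R (α - β)⁻¹ * ρ u) := by
  have hsum : w + α • u + -(w + β • u) = (α - β) • u := by rw [sub_smul]; abel
  have hrel := h.1 (w + α • u) (-(w + β • u)) (add_smul_ne_zero_of_notMem_span hw α)
    (neg_ne_zero.2 (add_smul_ne_zero_of_notMem_span hw β))
    (hsum ▸ smul_ne_zero (sub_ne_zero.2 hαβ) hu)
  rw [hsum, h.map_neg (add_smul_ne_zero_of_notMem_span hw β),
    h.map_smul (sub_ne_zero.2 hαβ) hu] at hrel
  have hinv : algebraMap Fq R (β - α)⁻¹ = -algebraMap Fq R (α - β)⁻¹ := by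
    rw [← neg_sub, inv_neg, _root_.map_neg]
  linear_combination -hrel - (ρ (w + α • u) * ρ u) * hinv

variable [Fintype Fq]

local notation "q" => Fintype.card Fq

theorem lineSum_smul (h : IsFqRecip Fq ρ) (hw : w ∉ Fq ∙ u) {β : Fq} (hβ : β ≠ 0) :
    lineSum Fq ρ u (β • w) = algebraMap Fq R β⁻¹ * lineSum Fq ρ u w := by
  rw [lineSum, lineSum, mul_sum]
  refine (Fintype.sum_equiv (Equiv.mulLeft₀ β hβ) _ _ fun α => ?_).symm
  rw [show Equiv.mulLeft₀ β hβ α = β * α from rfl, mul_smul, ← smul_add,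
    h.map_smul hβ (add_smul_ne_zero_of_notMem_span hw α)]

theorem lineSum_mul (h : IsFqRecip Fq ρ) {a b : V} (ha : a ∉ Fq ∙ u) (hb : b ∉ Fq ∙ u)
    (hab : a + b ∉ Fq ∙ u) :
    lineSum Fq ρ u a * lineSum Fq ρ u b =
      lineSum Fq ρ u (a + b) * (lineSum Fq ρ u a + lineSum Fq ρ u b) := by
  have key : ∀ α β : Fq, ρ (a + α • u) * ρ (b + β • u) =
      ρ (a + α • u) * ρ (a + b + α • u + β • u) + ρ (b + β • u) * ρ (a + b + β • u + α • u) := by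
    intro α β
    have e₁ : a + b + α • u + β • u = a + α • u + (b + β • u) := by abel
    have e₂ : a + b + β • u + α • u = a + α • u + (b + β • u) := by abel
    have hne : a + α • u + (b + β • u) ≠ 0 := by
      rw [← e₁, add_assoc, ← add_smul]
      exact add_smul_ne_zero_of_notMem_span hab _
    rw [e₁, e₂, h.1 _ _ (add_smul_ne_zero_of_notMem_span ha α)
      (add_smul_ne_zero_of_notMem_span hb β) hne]
    ring
  calc lineSum Fq ρ u a * lineSum Fq ρ u b
      = ∑ α : Fq, ρ (a + α • u) * lineSum Fq ρ u (a + b + α • u) +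
          ∑ β : Fq, ρ (b + β • u) * lineSum Fq ρ u (a + b + β • u) := by
        rw [lineSum, lineSum, sum_mul_sum]
        simp only [key, sum_add_distrib, lineSum, mul_sum]
        rw [sum_comm (s := univ) (t := univ)
          (f := fun α β => ρ (b + β • u) * ρ (a + b + β • u + α • u))]
    _ = lineSum Fq ρ u (a + b) * (lineSum Fq ρ u a + lineSum Fq ρ u b) := by
        simp only [lineSum_add_smul, ← sum_mul]
        unfold lineSum
        ring

theorem quotLineSum_isFqRecip (h : IsFqRecip Fq ρ) : IsFqRecip Fq (quotLineSum Fq ρ u) := by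
  have notMem {w : V} (hw : (Submodule.Quotient.mk w : V ⧸ Fq ∙ u) ≠ 0) : w ∉ Fq ∙ u :=
    mt (Submodule.Quotient.mk_eq_zero _).2 hw
  refine ⟨fun z₁ z₂ h₁ h₂ h₁₂ => ?_, fun β z hz => ?_⟩
  · obtain ⟨a, rfl⟩ := Submodule.Quotient.mk_surjective _ z₁
    obtain ⟨b, rfl⟩ := Submodule.Quotient.mk_surjective _ z₂
    rw [← Submodule.Quotient.mk_add] at h₁₂ ⊢
    rw [quotLineSum_mk (notMem h₁), quotLineSum_mk (notMem h₂), quotLineSum_mk (notMem h₁₂)]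
    exact h.lineSum_mul (notMem h₁) (notMem h₂) (notMem h₁₂)
  · obtain ⟨w, rfl⟩ := Submodule.Quotient.mk_surjective _ z
    rw [← Submodule.Quotient.mk_smul, quotLineSum_mk (notMem hz),
      quotLineSum_mk ((Submodule.smul_mem_iff _ β.ne_zero).not.2 (notMem hz)),
      h.lineSum_smul (notMem hz) β.ne_zero, ← mul_assoc, ← map_mul, mul_inv_cancel₀ β.ne_zero,
      map_one, one_mul]

theorem prod_line (h : IsFqRecip Fq ρ) (h0 : ρ 0 = 0) :
    ∏ α : Fq, (1 - C (ρ (α • u)) * X) = 1 - (C (ρ u) * X) ^ (q - 1) := by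
  rw [← FiniteField.prod_one_sub_algebraMap_mul]
  refine Fintype.prod_equiv (Equiv.inv Fq) _ _ fun α => ?_
  rw [h.map_smul_of_map_zero h0, Equiv.inv_apply, Polynomial.algebraMap_apply, C_mul, mul_assoc]

theorem prod_coset (h : IsFqRecip Fq ρ) (hu : u ≠ 0) (hw : w ∉ Fq ∙ u) :
    ∏ α : Fq, (1 - C (ρ (w + α • u)) * X) =
      1 - C (lineSum Fq ρ u w) * (X - C (ρ u ^ (q - 1)) * X ^ q) := by
  rw [FiniteField.prod_one_sub_mul_eq_one_sub_sum_mul (C (ρ u)) X _ fun α β hαβ => ?_, lineSum,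
    map_sum, C_pow]
  simpa [Polynomial.algebraMap_apply] using congrArg C (h.mul_add_smul hu hw hαβ)

theorem eRho_eq_comp [Fintype V] (h : IsFqRecip Fq ρ) (h0 : ρ 0 = 0) (hu : u ≠ 0) :
    eRho (Fq := Fq) ρ =
      (eRho (Fq := Fq) (quotLineSum Fq ρ u)).comp (X - C (ρ u ^ (q - 1)) * X ^ q) := by
  classical
  let _ : Fintype (V ⧸ Fq ∙ u) := Fintype.ofFinite _
  set E : R[X] := X - C (ρ u ^ (q - 1)) * X ^ q
  have hE : X * (1 - (C (ρ u) * X) ^ (q - 1)) = E := by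
    have hq : X * X ^ (q - 1) = (X : R[X]) ^ q := by
      rw [← pow_succ', Nat.sub_add_cancel Fintype.card_pos]
    rw [mul_pow, ← C_pow]
    linear_combination (-C (ρ u ^ (q - 1))) * hq
  have hfiber : ∀ z ∈ univ.erase (0 : V ⧸ Fq ∙ u),
      ∏ v with Submodule.Quotient.mk v = z, (1 - C (ρ v) * X) =
        1 - C (quotLineSum Fq ρ u z) * E := by
    intro z hz
    have hout : z.out ∉ Fq ∙ u := by
      rw [← Submodule.Quotient.mk_eq_zero, Submodule.Quotient.mk_out]
      exact ne_of_mem_erase hz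
    rw [prod_filter_mk_eq_prod_add_smul Fq hu _ (Submodule.Quotient.mk_out z), h.prod_coset hu hout,
      ← quotLineSum_mk hout, Submodule.Quotient.mk_out]
  rw [eRho_eq_X_mul_prod h0, eRho_eq_X_mul_prod quotLineSum_zero, mul_comp, X_comp,
    Polynomial.prod_comp, ← prod_fiberwise univ (Submodule.Quotient.mk : V → V ⧸ Fq ∙ u),
    ← mul_prod_erase univ _ (mem_univ 0), ← mul_prod_erase univ _ (mem_univ 0),
    prod_congr rfl hfiber, prod_filter_mk_eq_prod_add_smul Fq hu _ (Submodule.Quotient.mk_zero _)]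
  simp only [zero_add, h.prod_line h0, quotLineSum_zero, C_0, zero_mul, sub_zero, one_comp,
    sub_comp, mul_comp, C_comp, X_comp, one_mul]
  rw [← mul_assoc, hE]

theorem isQPolynomial_eRho_of_map_zero [FiniteDimensional Fq V] (h : IsFqRecip Fq ρ)
    (h0 : ρ 0 = 0) : IsQPolynomial q (eRho (Fq := Fq) ρ) := by
  induction hn : Module.finrank Fq V using Nat.strong_induction_on generalizing V with
  | _ n ih =>
  have : Finite V := Module.finite_of_finite Fq
  let _ : Fintype V := Fintype.ofFinite V
  rcases subsingleton_or_nontrivial V with hV | hV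
  · rw [eRho_eq_X_mul_prod h0, Fintype.prod_subsingleton _ 0, h0, C_0, zero_mul, sub_zero, mul_one]
    exact isQPolynomial_X q
  obtain ⟨u, hu⟩ := exists_ne (0 : V)
  have hrank : Module.finrank Fq (V ⧸ Fq ∙ u) < n := by
    have := (Fq ∙ u).finrank_quotient_add_finrank
    rw [finrank_span_singleton hu] at this
    omega
  rw [h.eRho_eq_comp h0 hu]
  exact (ih _ hrank h.quotLineSum_isFqRecip quotLineSum_zero rfl).comp
    (isQPolynomial_X_sub_C_mul_X_pow q _)

end IsFqRecip

end Reciprocal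

/-- **Proposition 1.15**: for an `𝔽_q`-reciprocal map `ρ`, the polynomial
`e_ρ(X) = X ∏_{v ∈ V∖{0}} (1 - ρ(v)X)` is `𝔽_q`-linear: every coefficient whose index is
not a power of `q = |𝔽_q|` vanishes. -/
theorem statement17 (Fq : Type) [Field Fq] [Fintype Fq]
    (V : Type) [AddCommGroup V] [Module Fq V] [FiniteDimensional Fq V]
    (R : Type) [CommRing R] [Algebra Fq R]
    (ρ : V → R) (h : IsFqRecip Fq ρ)
    (k : ℕ) (hk : ∀ i : ℕ, k ≠ Fintype.card Fq ^ i) :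
    (eRho (Fq := Fq) ρ).coeff k = 0 := by
  classical
  set ρ₀ : V → R := fun v => if v = 0 then 0 else ρ v
  have hρ₀ : ∀ v, v ≠ 0 → ρ₀ v = ρ v := fun v hv => if_neg hv
  rw [← eRho_congr hρ₀]
  exact (h.congr hρ₀).isQPolynomial_eRho_of_map_zero (if_pos rfl) k hk

end
end
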